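/- arXiv:2408.00626 — 3 statements merged into one kernel-verified Lean document; each statement's English description precedes it below -/
import Mathlib

section
/- Let U be a unitary on H_A ⊗ ℂ² with blocks V_{kl} = ⟨k|U|l⟩ as above and suppose 1 - |V_{00}|² and 1 - |V_{01}|² are strictly positive (so |V_{10}| and |V_{11}| are invertible). Writing polar decompositions V_{10} = U_0 |V_{10}| and V_{11} = U_1 |V_{11}| with U_0, U_1 unitary, one has U_0* U_1 = -|V_{10}|^{-1} V_{00}* V_{01} |V_{11}|^{-1}; in particular this product is a unitary operator determined by V_{00} and V_{01}. -/
open Matrix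
open scoped ComplexOrder

/-- Given the unitarity block relations for `V k l = ⟨k|U|l⟩` and polar
decompositions `V₁₀ = U₀·|V₁₀|`, `V₁₁ = U₁·|V₁₁|` with invertible absolute values
(strict positivity of `1 - |V₀₀|²` and `1 - |V₀₁|²`), the product `U₀* U₁` equals
`-|V₁₀|⁻¹ V₀₀* V₀₁ |V₁₁|⁻¹`; in particular it is a unitary determined by `V₀₀` and `V₀₁`. -/
theorem stmt1 (d : ℕ) (V00 V01 V10 V11 U0 U1 P Q : Matrix (Fin d) (Fin d) ℂ)
    (h00 : V00ᴴ * V00 + V10ᴴ * V10 = 1)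
    (h01 : V01ᴴ * V01 + V11ᴴ * V11 = 1)
    (hcross : V00ᴴ * V01 + V10ᴴ * V11 = 0)
    (hpos10 : ((1 : Matrix (Fin d) (Fin d) ℂ) - V00ᴴ * V00).PosDef)
    (hpos11 : ((1 : Matrix (Fin d) (Fin d) ℂ) - V01ᴴ * V01).PosDef)
    (hPpos : P.PosDef) (hQpos : Q.PosDef)
    (hP : P * P = V10ᴴ * V10) (hQ : Q * Q = V11ᴴ * V11)
    (hU0 : U0 ∈ Matrix.unitaryGroup (Fin d) ℂ)
    (hU1 : U1 ∈ Matrix.unitaryGroup (Fin d) ℂ)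
    (hpolar0 : V10 = U0 * P) (hpolar1 : V11 = U1 * Q) :
    U0ᴴ * U1 = -(P⁻¹ * V00ᴴ * V01 * Q⁻¹) ∧
    U0ᴴ * U1 ∈ Matrix.unitaryGroup (Fin d) ℂ := by
  have hmem : U0ᴴ * U1 ∈ Matrix.unitaryGroup (Fin d) ℂ := by
    simpa [Matrix.star_eq_conjTranspose] using mul_mem (Unitary.star_mem hU0) hU1
  have hPdet : IsUnit P.det := (Matrix.isUnit_iff_isUnit_det P).mp hPpos.isUnit
  have hQdet : IsUnit Q.det := (Matrix.isUnit_iff_isUnit_det Q).mp hQpos.isUnit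
  have hPinv : P⁻¹ * P = 1 := Matrix.nonsing_inv_mul P hPdet
  have hQinv : Q * Q⁻¹ = 1 := Matrix.mul_nonsing_inv Q hQdet
  have hPH : Pᴴ = P := hPpos.isHermitian
  have hkey : V00ᴴ * V01 = -(P * (U0ᴴ * U1) * Q) := by
    have h1 : V10ᴴ * V11 = P * (U0ᴴ * U1) * Q := by
      rw [hpolar0, hpolar1, Matrix.conjTranspose_mul, hPH]
      noncomm_ring
    rw [← h1]
    exact eq_neg_of_add_eq_zero_left hcross
  refine ⟨?_, hmem⟩
  have h2 : P⁻¹ * V00ᴴ * V01 * Q⁻¹ = P⁻¹ * (V00ᴴ * V01) * Q⁻¹ := by rw [mul_assoc P⁻¹]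
  rw [h2, hkey]
  have h3 : P⁻¹ * (P * (U0ᴴ * U1) * Q) * Q⁻¹ = (P⁻¹ * P) * (U0ᴴ * U1) * (Q * Q⁻¹) := by
    noncomm_ring
  rw [mul_neg, neg_mul, neg_neg, h3, hPinv, hQinv, one_mul, mul_one]
end

section
/- Let ρ^ss = Σ_{i=1}^d λ_i |i⟩⟨i| be a faithful density matrix on ℂ^d, invariant under the channel with Kraus operators K_0, K_1 on ℂ^d (Σ_k K_k* K_k = 1, Σ_k K_k ρ^ss K_k* = ρ^ss). For i = 1,…,d define vectors in ℂ^d ⊗ ℂ²: |v_i⟩ = Σ_{k=0}^{1} Σ_{j=1}^{d} √(λ_j/λ_i) ⟨i| K_k |j⟩ · |j⟩ ⊗ |k⟩. Then {|v_1⟩,…,|v_d⟩} is an orthonormal family. -/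
/-!
The Gram matrix of the vectors `vᵢ` is the transpose of `ρ^{-1/2} Φ(ρ) ρ^{-1/2}`, where
`ρ = diag λ` and `Φ(ρ) = ∑ₖ Kₖ ρ Kₖᴴ`: the weights `√(λⱼ/λᵢ)` contribute `λⱼ` in the middle and
`1/√(λᵢλᵢ')` outside. Invariance `Φ(ρ) = ρ` turns it into the identity.
-/

open Matrix

lemma Real.sqrt_div_mul_sqrt_div {a b c : ℝ} (ha : 0 ≤ a) :
    √(a / b) * √(a / c) = a / (√b * √c) := by
  rw [Real.sqrt_div ha, Real.sqrt_div ha, div_mul_div_comm, Real.mul_self_sqrt ha]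

lemma Matrix.sum_mul_diagonal_mul_conjTranspose_apply {ι κ : Type*} [Fintype ι] [DecidableEq ι]
    [Fintype κ] (K : κ → Matrix ι ι ℂ) (w : ι → ℂ) (i j : ι) :
    (∑ k, K k * diagonal w * (K k)ᴴ) i j = ∑ k, ∑ m, star (K k j m) * w m * K k i m := by
  simp only [sum_apply, mul_apply, conjTranspose_apply, diagonal_apply, mul_ite, mul_zero,
    Finset.sum_ite_eq', Finset.mem_univ, if_true]
  exact Finset.sum_congr rfl fun k _ => Finset.sum_congr rfl fun m _ => by ring

lemma inner_eq_channel_apply {ι κ : Type*} [Fintype ι] [DecidableEq ι] [Fintype κ]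
    (lam : ι → ℝ) (hpos : ∀ i, 0 < lam i) (K : κ → Matrix ι ι ℂ)
    (v : ι → EuclideanSpace ℂ (ι × κ))
    (hv : ∀ i j k, v i (j, k) = (√(lam j / lam i) : ℂ) * K k i j) (i i' : ι) :
    inner ℂ (v i) (v i') = ((√(lam i) * √(lam i'))⁻¹ : ℝ) *
      (∑ k, K k * diagonal (fun m => (lam m : ℂ)) * (K k)ᴴ) i' i := by
  rw [sum_mul_diagonal_mul_conjTranspose_apply, PiLp.inner_apply, Fintype.sum_prod_type,
    Finset.sum_comm, Finset.mul_sum]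
  refine Finset.sum_congr rfl fun k _ => ?_
  rw [Finset.mul_sum]
  refine Finset.sum_congr rfl fun m _ => ?_
  have hscale : (√(lam m / lam i) : ℂ) * √(lam m / lam i') =
      ((√(lam i) * √(lam i'))⁻¹ : ℝ) * lam m := by
    rw [← Complex.ofReal_mul, Real.sqrt_div_mul_sqrt_div (hpos m).le, div_eq_inv_mul,
      Complex.ofReal_mul]
  rw [hv, hv, RCLike.inner_apply, map_mul, Complex.conj_ofReal, ← RCLike.star_def]
  linear_combination (star (K k i m) * K k i' m) * hscale

theorem stmt3_general (d : ℕ) (lam : Fin d → ℝ)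
    (hpos : ∀ i, 0 < lam i)
    (K : Fin 2 → Matrix (Fin d) (Fin d) ℂ)
    (hinv : ∑ k, K k * Matrix.diagonal (fun i => (lam i : ℂ)) * (K k)ᴴ
        = Matrix.diagonal (fun i => (lam i : ℂ)))
    (v : Fin d → EuclideanSpace ℂ (Fin d × Fin 2))
    (hv : ∀ (i j : Fin d) (k : Fin 2),
      v i (j, k) = (Real.sqrt (lam j / lam i) : ℂ) * K k i j) :
    Orthonormal ℂ v := by
  rw [orthonormal_iff_ite]
  intro i i'
  rw [inner_eq_channel_apply lam hpos K v hv, hinv, diagonal_apply]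
  rcases eq_or_ne i' i with rfl | hne
  · have hsqrt : √(lam i') * √(lam i') = lam i' := Real.mul_self_sqrt (hpos i').le
    rw [if_pos rfl, if_pos rfl, hsqrt, ← Complex.ofReal_mul, inv_mul_cancel₀ (hpos i').ne',
      Complex.ofReal_one]
  · rw [if_neg hne, if_neg hne.symm, mul_zero]

/-- If `ρˢˢ = ∑ λᵢ |i⟩⟨i|` is a faithful density matrix invariant under the
channel with Kraus operators `K₀, K₁` on `ℂᵈ`, then the vectors
`|vᵢ⟩ = ∑_{k,j} √(λⱼ/λᵢ) ⟨i|K_k|j⟩ |j⟩⊗|k⟩` in `ℂᵈ ⊗ ℂ²` form an orthonormal family. -/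
theorem stmt3 (d : ℕ) (hd : 0 < d) (lam : Fin d → ℝ)
    (hpos : ∀ i, 0 < lam i) (hsum : ∑ i, lam i = 1)
    (K : Fin 2 → Matrix (Fin d) (Fin d) ℂ)
    (hKraus : ∑ k, (K k)ᴴ * K k = 1)
    (hinv : ∑ k, K k * Matrix.diagonal (fun i => (lam i : ℂ)) * (K k)ᴴ
        = Matrix.diagonal (fun i => (lam i : ℂ)))
    (v : Fin d → EuclideanSpace ℂ (Fin d × Fin 2))
    (hv : ∀ (i j : Fin d) (k : Fin 2),
      v i (j, k) = (Real.sqrt (lam j / lam i) : ℂ) * K k i j) :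
    Orthonormal ℂ v :=
  stmt3_general d lam hpos K hinv v hv
end

section
/- With the setup of translationally invariant modes on (ℂ²)^{⊗n}: the squared norm of (A*_1(n))² Ω_n equals 2(n-1)/n; hence the normalized two-excitation Fock vector |n_1 = 2; n⟩ := (1/√2)(A*_1(n))² Ω_n satisfies ⟨|n_1=2;n⟩, |n_1=2;n⟩⟩ = (n-1)/n → 1 as n → ∞. -/
/-!
Applying `A*_1(n)` to the state with amplitude `c` on every `k`-subset of the first `n` sites gives
the state with amplitude `(k + 1) c / √n` on every `(k + 1)`-subset, since a `(k + 1)`-subset arises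
from exactly `k + 1` of the `k`-subsets by one raising step. Hence `(A*_1(n))² Ω_n` has amplitude
`2 / n` on each of the `n.choose 2` two-site configurations, and squared norm
`n (n - 1) / 2 · 4 / n² = 2 (n - 1) / n`.
-/

/-- The vacuum `Ω_n = |0⟩^{⊗n}` of the spin chain, in the occupation-set representation
where a basis configuration is the (finite) set of sites carrying a `1`. -/
noncomputable def vac : Finset ℕ → ℂ := fun S => if S = ∅ then 1 else 0

/-- The raising operator `σ⁺ = |1⟩⟨0|` acting at site `i` of the chain. -/
noncomputable def sigmaPlus (i : ℕ) (ψ : Finset ℕ → ℂ) : Finset ℕ → ℂ :=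
  fun S => if i ∈ S then ψ (S.erase i) else 0

/-- The translationally invariant creation operator
`A*_1(n) = n^{-1/2} ∑_{i=1}^n σ⁺_i` for the single-excitation pattern `α = (1)`. -/
noncomputable def Astar1 (n : ℕ) (ψ : Finset ℕ → ℂ) : Finset ℕ → ℂ :=
  fun S => ((Real.sqrt n)⁻¹ : ℂ) * ∑ i ∈ Finset.range n, sigmaPlus i ψ S

open Finset

namespace Finset

theorem erase_mem_powersetCard_succ_iff {α : Type*} [DecidableEq α] {s t : Finset α} {a : α}
    {k : ℕ} (hs : a ∈ s) (ht : a ∈ t) :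
    t.erase a ∈ s.powersetCard k ↔ t ∈ s.powersetCard (k + 1) := by
  have ht_pos : 0 < t.card := card_pos.mpr ⟨a, ht⟩
  rw [mem_powersetCard, mem_powersetCard, erase_subset_iff_of_mem hs, card_erase_of_mem ht]
  exact and_congr_right' (by omega)

end Finset

noncomputable def excitationState (n k : ℕ) (c : ℂ) : Finset ℕ → ℂ :=
  fun S => if S ∈ (range n).powersetCard k then c else 0

theorem vac_eq_excitationState (n : ℕ) : vac = excitationState n 0 1 := by
  ext S
  simp [vac, excitationState]

theorem mul_excitationState_apply (n k : ℕ) (a c : ℂ) (S : Finset ℕ) :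
    a * excitationState n k c S = excitationState n k (a * c) S := by
  simp only [excitationState, mul_ite, mul_zero]

theorem sum_sigmaPlus_excitationState (n k : ℕ) (c : ℂ) (S : Finset ℕ) :
    ∑ i ∈ range n, sigmaPlus i (excitationState n k c) S =
      excitationState n (k + 1) ((k + 1) * c) S := by
  have hterm : ∀ i ∈ range n, sigmaPlus i (excitationState n k c) S =
      if i ∈ S then excitationState n (k + 1) c S else 0 := by
    intro i hi
    by_cases hiS : i ∈ S
    · simp only [sigmaPlus, excitationState, if_pos hiS,
        erase_mem_powersetCard_succ_iff hi hiS]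
    · simp only [sigmaPlus, if_neg hiS]
  rw [sum_congr rfl hterm, sum_ite_mem, sum_const]
  by_cases hS : S ∈ (range n).powersetCard (k + 1)
  · obtain ⟨hsub, hcard⟩ := mem_powersetCard.mp hS
    simp only [excitationState, if_pos hS, inter_eq_right.mpr hsub, hcard, nsmul_eq_mul]
    push_cast
    ring
  · simp only [excitationState, if_neg hS, smul_zero]

theorem astar1_excitationState (n k : ℕ) (c : ℂ) :
    Astar1 n (excitationState n k c) =
      excitationState n (k + 1) ((Real.sqrt n : ℂ)⁻¹ * ((k + 1) * c)) := by
  ext S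
  rw [Astar1, sum_sigmaPlus_excitationState, mul_excitationState_apply]

theorem astar1_astar1_vac (n : ℕ) :
    Astar1 n (Astar1 n vac) = excitationState n 2 ((2 / n : ℝ) : ℂ) := by
  have hsq : (Real.sqrt n : ℂ)⁻¹ * (Real.sqrt n : ℂ)⁻¹ = (n : ℂ)⁻¹ := by
    rw [← mul_inv, ← Complex.ofReal_mul, Real.mul_self_sqrt n.cast_nonneg, Complex.ofReal_natCast]
  rw [vac_eq_excitationState n, astar1_excitationState, astar1_excitationState]
  congr 1
  push_cast
  linear_combination 2 * hsq

theorem tsum_conj_mul_excitationState (n k : ℕ) (c : ℝ) :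
    ∑' S, (starRingEnd ℂ) (excitationState n k c S) * excitationState n k c S =
      ((n.choose k * c ^ 2 : ℝ) : ℂ) := by
  have hsupp : ∀ S ∉ (range n).powersetCard k,
      (starRingEnd ℂ) (excitationState n k c S) * excitationState n k c S = 0 := by
    intro S hS
    simp only [excitationState, if_neg hS, mul_zero]
  rw [tsum_eq_sum hsupp]
  have hterm : ∀ S ∈ (range n).powersetCard k,
      (starRingEnd ℂ) (excitationState n k c S) * excitationState n k c S = ((c ^ 2 : ℝ) : ℂ) := by
    intro S hS
    simp only [excitationState, if_pos hS, Complex.conj_ofReal]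
    push_cast
    ring
  rw [sum_congr rfl hterm, sum_const, card_powersetCard, card_range, nsmul_eq_mul]
  push_cast
  ring

/-- The squared norm of `(A*_1(n))² Ω_n` equals `2(n-1)/n`, so the
normalized two-excitation Fock vector `|n₁=2;n⟩ = (1/√2)(A*_1(n))² Ω_n` has squared norm
`(n-1)/n`, which tends to `1` as `n → ∞`. -/
theorem stmt10 :
    (∀ n : ℕ, 1 ≤ n →
      ∑' S : Finset ℕ,
          (starRingEnd ℂ) (Astar1 n (Astar1 n vac) S) * Astar1 n (Astar1 n vac) S
        = ((2 * ((n : ℝ) - 1) / n : ℝ) : ℂ)) ∧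
    (∀ n : ℕ, 1 ≤ n →
      ∑' S : Finset ℕ,
          (starRingEnd ℂ) (((Real.sqrt 2)⁻¹ : ℂ) * Astar1 n (Astar1 n vac) S) *
            (((Real.sqrt 2)⁻¹ : ℂ) * Astar1 n (Astar1 n vac) S)
        = ((((n : ℝ) - 1) / n : ℝ) : ℂ)) ∧
    Filter.Tendsto (fun n : ℕ => ((n : ℝ) - 1) / n) Filter.atTop (nhds 1) := by
  refine ⟨fun n hn => ?_, fun n hn => ?_, ?_⟩
  · have hn0 : (n : ℝ) ≠ 0 := by positivity
    rw [astar1_astar1_vac, tsum_conj_mul_excitationState, Nat.cast_choose_two]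
    congr 1
    field_simp
  · have hn0 : (n : ℝ) ≠ 0 := by positivity
    have hstate : ∀ S, (Real.sqrt 2 : ℂ)⁻¹ * Astar1 n (Astar1 n vac) S =
        excitationState n 2 (((Real.sqrt 2)⁻¹ * (2 / n) : ℝ) : ℂ) S := by
      intro S
      rw [astar1_astar1_vac, mul_excitationState_apply]
      push_cast
      rfl
    simp only [hstate]
    rw [tsum_conj_mul_excitationState, Nat.cast_choose_two, mul_pow, inv_pow,
      Real.sq_sqrt zero_le_two]
    congr 1
    field_simp
  · simpa [sub_eq_neg_add] using tendsto_add_mul_div_add_mul_atTop_nhds (-1 : ℝ) 0 1 one_ne_zero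
end
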